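/- arXiv:0709.2801 — 2 statements merged into one kernel-verified Lean document; each statement's English description precedes it below -/
import Mathlib

section
/- Let 0 → V⁰ → V¹ → ... → V^r → 0 be an acyclic complex of finite-dimensional real vector spaces with differential D, and for each i let 𝔟^i be a basis of V^i. For each i choose a basis 𝔠^i of D(V^{i-1}) ⊆ V^i and a linearly independent family 𝔠̃^{i-1} in V^{i-1} with D(𝔠̃^{i-1}) = 𝔠^i. Then (𝔠^i, 𝔠̃^i) is a basis of V^i, and the quantity det(V•, D, 𝔟•) := ∏_i |[𝔟^i / (𝔠^i, 𝔠̃^i)]|^{(-1)^i} is independent of the choices of 𝔠^i and 𝔠̃^i. -/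
/-!
With respect to a basis `(𝔠^i, 𝔠̃^i)` of `V^i`, the differential is block-triangular: `𝔠^i` spans
`ker D = D(V^{i-1})` and `D` carries `𝔠̃^i` onto `𝔠^{i+1}`. Hence the transition matrix between two
such bases is block upper triangular, and its diagonal blocks are `[𝔠'^i/𝔠^i]` and the change of
lifts, which `D` turns into `[𝔠'^{i+1}/𝔠^{i+1}]`. The alternating product of these factors
telescopes to `|[𝔠'^{r+1}/𝔠^{r+1}]|^{±1} = 1`, the bases of `D(V^r) = 0` being empty.
-/

/-- `|[𝔟/𝔞]|`: the absolute value of the determinant of the change-of-basis matrix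
expressing the basis `b` in terms of the basis `a` (the index types may differ; the
absolute value does not depend on the identification chosen). -/
noncomputable def absDetChange {ι ι' V : Type*} [Fintype ι] [DecidableEq ι] [Fintype ι']
    [AddCommGroup V] [Module ℝ V] (a : Module.Basis ι ℝ V) (b : Module.Basis ι' ℝ V) : ℝ :=
  letI := Classical.propDecidable
  if h : Nonempty (ι' ≃ ι) then |(a.toMatrix (b ∘ h.some.symm)).det| else 0

/-- Index type of the combined family `(𝔠^i, 𝔠̃^i)`, where `𝔠^i` is indexed by the
index type `κ (i-1)` of `𝔠̃^{i-1}` (empty contribution for `i = 0`). -/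
def combIdx (κ : ℕ → Type*) : ℕ → Type _
  | 0 => PEmpty ⊕ κ 0
  | (i + 1) => κ i ⊕ κ (i + 1)

instance (κ : ℕ → Type*) [∀ i, Fintype (κ i)] (i : ℕ) : Fintype (combIdx κ i) := by
  cases i with
  | zero => exact inferInstanceAs (Fintype (PEmpty ⊕ κ 0))
  | succ n => exact inferInstanceAs (Fintype (κ n ⊕ κ (n + 1)))

instance (κ : ℕ → Type*) [∀ i, DecidableEq (κ i)] (i : ℕ) : DecidableEq (combIdx κ i) := by
  cases i with
  | zero => exact inferInstanceAs (DecidableEq (PEmpty ⊕ κ 0))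
  | succ n => exact inferInstanceAs (DecidableEq (κ n ⊕ κ (n + 1)))

open Module Submodule

theorem Module.Basis.exists_sum_of_ker {R V W α β : Type*} [Ring R] [AddCommGroup V] [Module R V]
    [AddCommGroup W] [Module R W] (f : V →ₗ[R] W) {v : α → V} {u : β → V}
    (hv : LinearIndependent R v) (hv_span : span R (Set.range v) = LinearMap.ker f)
    (hu : LinearIndependent R (f ∘ u)) (hu_span : span R (Set.range (f ∘ u)) = LinearMap.range f) :
    ∃ B : Basis (α ⊕ β) R V, ⇑B = Sum.elim v u := by
  have hdisj : Disjoint (span R (Set.range v)) (span R (Set.range u)) := by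
    rw [hv_span]; exact (range_ker_disjoint hu).symm
  have hspan : ⊤ ≤ span R (Set.range (Sum.elim v u)) := by
    rw [Set.Sum.elim_range, span_union, hv_span, sup_comm, ← comap_map_eq, map_span,
      ← Set.range_comp, hu_span, (LinearMap.range_le_iff_comap (f := f)).mp le_rfl]
  exact ⟨.mk (hv.sum_type (hu.of_comp f) hdisj) hspan, Basis.coe_mk _ _⟩

theorem Module.Basis.repr_map_inl_eq_repr_inr {R V W α β γ : Type*} [Ring R] [AddCommGroup V]
    [Module R V] [AddCommGroup W] [Module R W] (f : V →ₗ[R] W) {B : Basis (α ⊕ β) R V}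
    {C : Basis (β ⊕ γ) R W} (hB : ∀ a, f (B (.inl a)) = 0)
    (hBC : ∀ b, f (B (.inr b)) = C (.inl b)) (v : V) (b : β) :
    C.repr (f v) (.inl b) = B.repr v (.inr b) := by
  classical
  have h : (Finsupp.lapply (.inl b)) ∘ₗ C.repr.toLinearMap ∘ₗ f
      = (Finsupp.lapply (.inr b)) ∘ₗ B.repr.toLinearMap := by
    refine B.ext fun
      | .inl a => by simp [hB]
      | .inr b' => by simp [hBC, Finsupp.single_apply]
  exact LinearMap.congr_fun h v

theorem LinearIndependent.nonempty_equiv_of_span_eq {R M ι ι' : Type*} [DivisionRing R]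
    [AddCommGroup M] [Module R M] [Fintype ι] [Fintype ι'] {v : ι → M}
    {w : ι' → M} (hv : LinearIndependent R v) (hw : LinearIndependent R w)
    (h : span R (Set.range v) = span R (Set.range w)) : Nonempty (ι ≃ ι') :=
  ⟨Fintype.equivOfCardEq <| by rw [← finrank_span_eq_card hv, ← finrank_span_eq_card hw, h]⟩

theorem Finset.prod_range_mul_succ_zpow_neg_one_pow {G : Type*} [CommGroupWithZero G] (p : ℕ → G)
    (hp : ∀ i, p i ≠ 0) (n : ℕ) :
    ∏ i ∈ range (n + 1), (p i * p (i + 1)) ^ ((-1 : ℤ) ^ i) = p 0 * p (n + 1) ^ ((-1 : ℤ) ^ n) := by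
  induction n with
  | zero => simp
  | succ n ih =>
    rw [prod_range_succ, ih, mul_zpow, mul_assoc, ← mul_assoc (p (n + 1) ^ _),
      ← zpow_add₀ (hp (n + 1)), pow_succ, mul_neg_one, add_neg_cancel, zpow_zero, one_mul]

section AbsDetChange

variable {V ι ι' ι'' : Type*} [AddCommGroup V] [Module ℝ V] [Fintype ι] [DecidableEq ι]
  [Fintype ι']

theorem absDetChange_eq (a : Basis ι ℝ V) (b : Basis ι' ℝ V) (e : ι' ≃ ι) :
    absDetChange a b = |(a.toMatrix (b ∘ e.symm)).det| := by
  have h : Nonempty (ι' ≃ ι) := ⟨e⟩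
  have hsub : a.toMatrix (b ∘ h.some.symm)
      = (a.toMatrix (b ∘ e.symm)).submatrix (Equiv.refl ι) (h.some.symm.trans e) := by
    ext; simp [Basis.toMatrix_apply]
  rw [absDetChange, dif_pos h, hsub]
  -- `absDetChange` computes the determinant with the classical `DecidableEq` instance
  refine (congrArg abs ?_).trans (Matrix.abs_det_submatrix_equiv_equiv (Equiv.refl ι)
    (h.some.symm.trans e) (a.toMatrix (b ∘ e.symm)))
  convert rfl

theorem absDetChange_ne_zero (a : Basis ι ℝ V) (b : Basis ι' ℝ V) : absDetChange a b ≠ 0 := by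
  rw [absDetChange_eq a b (b.indexEquiv a), ← Basis.coe_reindex, abs_ne_zero]
  exact Matrix.det_ne_zero_of_right_inverse (a.toMatrix_mul_toMatrix_flip _)

theorem absDetChange_mul [DecidableEq ι'] [Fintype ι''] (a : Basis ι ℝ V) (b : Basis ι' ℝ V)
    (c : Basis ι'' ℝ V) : absDetChange a b * absDetChange b c = absDetChange a c := by
  set e := b.indexEquiv a
  set f := c.indexEquiv b
  have hbc : (b.toMatrix (c ∘ f.symm)).submatrix e.symm e.symm
      = (b.reindex e).toMatrix (c ∘ (f.trans e).symm) := by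
    ext; simp [Basis.toMatrix_apply]
  rw [absDetChange_eq a b e, absDetChange_eq b c f, absDetChange_eq a c (f.trans e), ← abs_mul,
    ← Matrix.det_submatrix_equiv_self e.symm (b.toMatrix (c ∘ f.symm)), ← Matrix.det_mul, hbc,
    ← Basis.coe_reindex, Basis.toMatrix_mul_toMatrix]

end AbsDetChange

section BlockTriangular

variable {V α β α' β' : Type*} [AddCommGroup V] [Module ℝ V] [Fintype α] [DecidableEq α]

noncomputable def absDetInl (B : Basis (α ⊕ β) ℝ V) (B' : Basis (α' ⊕ β') ℝ V) (e : α' ≃ α) : ℝ :=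
  |((B.toMatrix (B' ∘ Sum.inl)).submatrix Sum.inl e.symm).det|

theorem absDetInl_of_isEmpty [IsEmpty α] (B : Basis (α ⊕ β) ℝ V) (B' : Basis (α' ⊕ β') ℝ V)
    (e : α' ≃ α) : absDetInl B B' e = 1 := by
  rw [absDetInl, Matrix.det_isEmpty, abs_one]

variable [Fintype β] [DecidableEq β] [Fintype α'] [Fintype β']

theorem absDetChange_eq_absDetInl_mul (B : Basis (α ⊕ β) ℝ V) (B' : Basis (α' ⊕ β') ℝ V)
    (eα : α' ≃ α) (eβ : β' ≃ β) (h : ∀ a b, B.repr (B' (.inl a)) (.inr b) = 0) :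
    absDetChange B B' = absDetInl B B' eα *
      |((B.toMatrix (B' ∘ Sum.inr)).submatrix Sum.inr eβ.symm).det| := by
  rw [absDetChange_eq B B' (eα.sumCongr eβ), absDetInl, ← abs_mul, ← Matrix.det_fromBlocks_zero₂₁
    _ (((B.toMatrix (B' ∘ Sum.inr)).submatrix Sum.inl eβ.symm))]
  congr 2
  ext (x | x) (y | y) <;> simp [Basis.toMatrix_apply, h]

variable {W γ γ' : Type*} [AddCommGroup W] [Module ℝ W]

theorem absDetChange_eq_absDetInl_mul_absDetInl (f : V →ₗ[ℝ] W) {B : Basis (α ⊕ β) ℝ V}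
    {B' : Basis (α' ⊕ β') ℝ V} {C : Basis (β ⊕ γ) ℝ W} {C' : Basis (β' ⊕ γ') ℝ W}
    (hB : ∀ a, f (B (.inl a)) = 0) (hB' : ∀ a, f (B' (.inl a)) = 0)
    (hBC : ∀ b, f (B (.inr b)) = C (.inl b)) (hBC' : ∀ b, f (B' (.inr b)) = C' (.inl b))
    (eα : α' ≃ α) (eβ : β' ≃ β) :
    absDetChange B B' = absDetInl B B' eα * absDetInl C C' eβ := by
  have hrepr := B.repr_map_inl_eq_repr_inr f hB hBC
  rw [absDetChange_eq_absDetInl_mul B B' eα eβ fun a b => by rw [← hrepr, hB', map_zero,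
    Finsupp.zero_apply], absDetInl]
  congr 4
  ext x y
  simp [Basis.toMatrix_apply, ← hBC', hrepr]

end BlockTriangular

section Complex

variable {R : Type*} [Ring R] {V : ℕ → Type*} [∀ i, AddCommGroup (V i)] [∀ i, Module R (V i)]
  {κ : ℕ → Type*} (D : ∀ i, V i →ₗ[R] V (i + 1))

theorem exists_basis_combIdx [∀ i, Fintype (κ i)] (hexact0 : LinearMap.ker (D 0) = ⊥)
    (hexact : ∀ i, LinearMap.ker (D (i + 1)) = LinearMap.range (D i)) {ct : ∀ i, κ i → V i}
    (hc : ∀ i, LinearIndependent R (fun j => D i (ct i j)) ∧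
      span R (Set.range fun j => D i (ct i j)) = LinearMap.range (D i)) :
    (∃ B : Basis (combIdx κ 0) R (V 0), ∀ j, B (.inr j) = ct 0 j) ∧
    ∀ i, ∃ B : Basis (combIdx κ (i + 1)) R (V (i + 1)),
      (∀ j, B (.inl j) = D i (ct i j)) ∧ ∀ j, B (.inr j) = ct (i + 1) j := by
  constructor
  · obtain ⟨B, hB⟩ := Basis.exists_sum_of_ker (D 0) (v := PEmpty.elim) linearIndependent_empty_type
      (by rw [Set.range_eq_empty, span_empty, hexact0]) (hc 0).1 (hc 0).2
    exact ⟨B, fun j => congr_fun hB (.inr j)⟩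
  · intro i
    obtain ⟨B, hB⟩ := Basis.exists_sum_of_ker (D (i + 1)) (hc i).1 ((hc i).2.trans (hexact i).symm)
      (hc (i + 1)).1 (hc (i + 1)).2
    exact ⟨B, fun j => congr_fun hB (.inl j), fun j => congr_fun hB (.inr j)⟩

structure IsAdapted (B : ∀ i, Basis (combIdx κ i) R (V i)) : Prop where
  map_inl : ∀ i (a : κ i), D (i + 1) (B (i + 1) (.inl a)) = 0
  map_inr_zero : ∀ a : κ 0, D 0 (B 0 (.inr a)) = B 1 (.inl a)
  map_inr_succ : ∀ i (a : κ (i + 1)), D (i + 1) (B (i + 1) (.inr a)) = B (i + 2) (.inl a)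

theorem IsAdapted.of_lifts {D : ∀ i, V i →ₗ[R] V (i + 1)} (hDD : ∀ i, D (i + 1) ∘ₗ D i = 0)
    {ct : ∀ i, κ i → V i} {B : ∀ i, Basis (combIdx κ i) R (V i)} (h0 : ∀ j, B 0 (.inr j) = ct 0 j)
    (hl : ∀ i j, B (i + 1) (.inl j) = D i (ct i j))
    (hr : ∀ i j, B (i + 1) (.inr j) = ct (i + 1) j) : IsAdapted D B where
  map_inl i a := by rw [hl]; exact LinearMap.congr_fun (hDD i) _
  map_inr_zero a := by rw [h0, hl]
  map_inr_succ i a := by rw [hr, hl]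

end Complex

section Determinant

variable {V : ℕ → Type*} [∀ i, AddCommGroup (V i)] [∀ i, Module ℝ (V i)] {κ κ' : ℕ → Type*}
  [∀ i, Fintype (κ i)] [∀ i, DecidableEq (κ i)] [∀ i, Fintype (κ' i)]
  {D : ∀ i, V i →ₗ[ℝ] V (i + 1)}
  {B : ∀ i, Basis (combIdx κ i) ℝ (V i)} {B' : ∀ i, Basis (combIdx κ' i) ℝ (V i)}

/-- `|[𝔠'^i/𝔠^i]|` for the two bases `𝔠^i = B i ∘ inl`, `𝔠'^i = B' i ∘ inl` of `D(V^{i-1})`;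
these bases are empty for `i = 0`. -/
noncomputable def imageBasisChange (B : ∀ i, Basis (combIdx κ i) ℝ (V i))
    (B' : ∀ i, Basis (combIdx κ' i) ℝ (V i)) (e : ∀ i, κ' i ≃ κ i) : ℕ → ℝ
  | 0 => 1
  | i + 1 => absDetInl (B (i + 1)) (B' (i + 1)) (e i)

theorem IsAdapted.absDetChange_eq (hB : IsAdapted D B) (hB' : IsAdapted D B')
    (e : ∀ i, κ' i ≃ κ i) (i : ℕ) :
    absDetChange (B i) (B' i) = imageBasisChange B B' e i * imageBasisChange B B' e (i + 1) := by
  cases i with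
  | zero =>
    have h := absDetChange_eq_absDetInl_mul_absDetInl (D 0) (B := B 0) (B' := B' 0)
      (fun a => a.elim) (fun a => a.elim) hB.map_inr_zero hB'.map_inr_zero
      (Equiv.equivOfIsEmpty _ _) (e 0)
    rw [absDetInl_of_isEmpty (B 0) (B' 0)] at h
    exact h
  | succ i =>
    exact absDetChange_eq_absDetInl_mul_absDetInl (D (i + 1)) (hB.map_inl i) (hB'.map_inl i)
      (hB.map_inr_succ i) (hB'.map_inr_succ i) (e i) (e (i + 1))

theorem IsAdapted.imageBasisChange_ne_zero (hB : IsAdapted D B) (hB' : IsAdapted D B')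
    (e : ∀ i, κ' i ≃ κ i) : ∀ i, imageBasisChange B B' e i ≠ 0
  | 0 => one_ne_zero
  | i + 1 => right_ne_zero_of_mul (hB.absDetChange_eq hB' e i ▸ absDetChange_ne_zero (B i) (B' i))

theorem IsAdapted.prod_absDetChange_zpow_eq [∀ i, DecidableEq (κ' i)] {ι : ℕ → Type*}
    [∀ i, Fintype (ι i)] (hB : IsAdapted D B) (hB' : IsAdapted D B') (e : ∀ i, κ' i ≃ κ i)
    {r : ℕ} (hr : IsEmpty (κ r)) (b : ∀ i, Basis (ι i) ℝ (V i)) :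
    ∏ i ∈ Finset.range (r + 1), absDetChange (B i) (b i) ^ ((-1 : ℤ) ^ i) =
      ∏ i ∈ Finset.range (r + 1), absDetChange (B' i) (b i) ^ ((-1 : ℤ) ^ i) := by
  set p := imageBasisChange B B' e
  have hp_last : p (r + 1) = 1 := absDetInl_of_isEmpty _ _ _
  calc ∏ i ∈ Finset.range (r + 1), absDetChange (B i) (b i) ^ ((-1 : ℤ) ^ i)
      = ∏ i ∈ Finset.range (r + 1),
          (p i * p (i + 1)) ^ ((-1 : ℤ) ^ i) * absDetChange (B' i) (b i) ^ ((-1 : ℤ) ^ i) :=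
        Finset.prod_congr rfl fun i _ => by
          rw [← absDetChange_mul (B i) (B' i), hB.absDetChange_eq hB' e, mul_zpow]
    _ = p 0 * p (r + 1) ^ ((-1 : ℤ) ^ r) *
          ∏ i ∈ Finset.range (r + 1), absDetChange (B' i) (b i) ^ ((-1 : ℤ) ^ i) := by
        rw [Finset.prod_mul_distrib,
          Finset.prod_range_mul_succ_zpow_neg_one_pow p (hB.imageBasisChange_ne_zero hB' e)]
    _ = ∏ i ∈ Finset.range (r + 1), absDetChange (B' i) (b i) ^ ((-1 : ℤ) ^ i) := by
        rw [hp_last, one_zpow, mul_one]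
        exact one_mul _

end Determinant

theorem comb_is_basis_and_det_well_defined_general
    (r : ℕ) (V : ℕ → Type) [∀ i, AddCommGroup (V i)] [∀ i, Module ℝ (V i)]
    (hVtriv : ∀ i, r < i → Subsingleton (V i))
    -- the differential and acyclicity of `0 → V⁰ → V¹ → ⋯`
    (D : ∀ i, V i →ₗ[ℝ] V (i + 1))
    (hDD : ∀ i, (D (i + 1)).comp (D i) = 0)
    (hexact0 : LinearMap.ker (D 0) = ⊥)
    (hexact : ∀ i, LinearMap.ker (D (i + 1)) = LinearMap.range (D i))
    -- the given bases `𝔟^i`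
    (ι : ℕ → Type) [∀ i, Fintype (ι i)]
    (b : ∀ i, Module.Basis (ι i) ℝ (V i))
    -- two systems of choices `𝔠̃` (with `𝔠^{i+1} = D(𝔠̃^i)`)
    (κ κ' : ℕ → Type) [∀ i, Fintype (κ i)] [∀ i, DecidableEq (κ i)]
    [∀ i, Fintype (κ' i)] [∀ i, DecidableEq (κ' i)]
    (ct : ∀ i, κ i → V i) (ct' : ∀ i, κ' i → V i)
    (hc_basis : ∀ i, LinearIndependent ℝ (fun j => D i (ct i j)) ∧
      Submodule.span ℝ (Set.range fun j => D i (ct i j)) =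
        (LinearMap.range (D i)).restrictScalars ℝ)
    (hc'_basis : ∀ i, LinearIndependent ℝ (fun j => D i (ct' i j)) ∧
      Submodule.span ℝ (Set.range fun j => D i (ct' i j)) =
        (LinearMap.range (D i)).restrictScalars ℝ) :
    -- (a) the combined families `(𝔠^i, 𝔠̃^i)` are bases of the `V^i`
    ((∃ B0 : Module.Basis (combIdx κ 0) ℝ (V 0), ∀ j : κ 0, B0 (Sum.inr j) = ct 0 j) ∧
     (∀ i, ∃ B : Module.Basis (combIdx κ (i + 1)) ℝ (V (i + 1)),
        (∀ j : κ i, B (Sum.inl j) = D i (ct i j)) ∧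
        (∀ j : κ (i + 1), B (Sum.inr j) = ct (i + 1) j)) ∧
     (∃ B0 : Module.Basis (combIdx κ' 0) ℝ (V 0), ∀ j : κ' 0, B0 (Sum.inr j) = ct' 0 j) ∧
     (∀ i, ∃ B : Module.Basis (combIdx κ' (i + 1)) ℝ (V (i + 1)),
        (∀ j : κ' i, B (Sum.inl j) = D i (ct' i j)) ∧
        (∀ j : κ' (i + 1), B (Sum.inr j) = ct' (i + 1) j))) ∧
    -- (b) `det(V•, D, 𝔟•)` does not depend on the choice of `𝔠̃`
    (∀ (B : ∀ i, Module.Basis (combIdx κ i) ℝ (V i)) (B' : ∀ i, Module.Basis (combIdx κ' i) ℝ (V i)),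
      (∀ j : κ 0, B 0 (Sum.inr j) = ct 0 j) →
      (∀ i (j : κ i), B (i + 1) (Sum.inl j) = D i (ct i j)) →
      (∀ i (j : κ (i + 1)), B (i + 1) (Sum.inr j) = ct (i + 1) j) →
      (∀ j : κ' 0, B' 0 (Sum.inr j) = ct' 0 j) →
      (∀ i (j : κ' i), B' (i + 1) (Sum.inl j) = D i (ct' i j)) →
      (∀ i (j : κ' (i + 1)), B' (i + 1) (Sum.inr j) = ct' (i + 1) j) →
      ∏ i ∈ Finset.range (r + 1), absDetChange (B i) (b i) ^ ((-1 : ℤ) ^ i) =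
      ∏ i ∈ Finset.range (r + 1), absDetChange (B' i) (b i) ^ ((-1 : ℤ) ^ i)) := by
  have hbases := exists_basis_combIdx D hexact0 hexact hc_basis
  have hbases' := exists_basis_combIdx D hexact0 hexact hc'_basis
  refine ⟨⟨hbases.1, hbases.2, hbases'.1, hbases'.2⟩, ?_⟩
  intro B B' hB0 hBl hBr hB'0 hB'l hB'r
  have : Subsingleton (V (r + 1)) := hVtriv (r + 1) r.lt_succ_self
  have hκr : IsEmpty (κ r) := (linearIndependent_subsingleton_iff _).mp (hc_basis r).1
  have e i : κ' i ≃ κ i := ((hc'_basis i).1.nonempty_equiv_of_span_eq (hc_basis i).1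
    ((hc'_basis i).2.trans (hc_basis i).2.symm)).some
  exact (IsAdapted.of_lifts hDD hB0 hBl hBr).prod_absDetChange_zpow_eq
    (IsAdapted.of_lifts hDD hB'0 hB'l hB'r) e hκr b

theorem comb_is_basis_and_det_well_defined
    (r : ℕ) (V : ℕ → Type) [∀ i, AddCommGroup (V i)] [∀ i, Module ℝ (V i)]
    [∀ i, FiniteDimensional ℝ (V i)]
    (hVtriv : ∀ i, r < i → Subsingleton (V i))
    -- the differential and acyclicity of `0 → V⁰ → V¹ → ⋯`
    (D : ∀ i, V i →ₗ[ℝ] V (i + 1))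
    (hDD : ∀ i, (D (i + 1)).comp (D i) = 0)
    (hexact0 : LinearMap.ker (D 0) = ⊥)
    (hexact : ∀ i, LinearMap.ker (D (i + 1)) = LinearMap.range (D i))
    -- the given bases `𝔟^i`
    (ι : ℕ → Type) [∀ i, Fintype (ι i)] [∀ i, DecidableEq (ι i)]
    (b : ∀ i, Module.Basis (ι i) ℝ (V i))
    -- two systems of choices `𝔠̃` (with `𝔠^{i+1} = D(𝔠̃^i)`)
    (κ κ' : ℕ → Type) [∀ i, Fintype (κ i)] [∀ i, DecidableEq (κ i)]
    [∀ i, Fintype (κ' i)] [∀ i, DecidableEq (κ' i)]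
    (ct : ∀ i, κ i → V i) (ct' : ∀ i, κ' i → V i)
    (hct_li : ∀ i, LinearIndependent ℝ (ct i))
    (hct'_li : ∀ i, LinearIndependent ℝ (ct' i))
    (hc_basis : ∀ i, LinearIndependent ℝ (fun j => D i (ct i j)) ∧
      Submodule.span ℝ (Set.range fun j => D i (ct i j)) =
        (LinearMap.range (D i)).restrictScalars ℝ)
    (hc'_basis : ∀ i, LinearIndependent ℝ (fun j => D i (ct' i j)) ∧
      Submodule.span ℝ (Set.range fun j => D i (ct' i j)) =
        (LinearMap.range (D i)).restrictScalars ℝ) :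
    -- (a) the combined families `(𝔠^i, 𝔠̃^i)` are bases of the `V^i`
    ((∃ B0 : Module.Basis (combIdx κ 0) ℝ (V 0), ∀ j : κ 0, B0 (Sum.inr j) = ct 0 j) ∧
     (∀ i, ∃ B : Module.Basis (combIdx κ (i + 1)) ℝ (V (i + 1)),
        (∀ j : κ i, B (Sum.inl j) = D i (ct i j)) ∧
        (∀ j : κ (i + 1), B (Sum.inr j) = ct (i + 1) j)) ∧
     (∃ B0 : Module.Basis (combIdx κ' 0) ℝ (V 0), ∀ j : κ' 0, B0 (Sum.inr j) = ct' 0 j) ∧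
     (∀ i, ∃ B : Module.Basis (combIdx κ' (i + 1)) ℝ (V (i + 1)),
        (∀ j : κ' i, B (Sum.inl j) = D i (ct' i j)) ∧
        (∀ j : κ' (i + 1), B (Sum.inr j) = ct' (i + 1) j))) ∧
    -- (b) `det(V•, D, 𝔟•)` does not depend on the choice of `𝔠̃`
    (∀ (B : ∀ i, Module.Basis (combIdx κ i) ℝ (V i)) (B' : ∀ i, Module.Basis (combIdx κ' i) ℝ (V i)),
      (∀ j : κ 0, B 0 (Sum.inr j) = ct 0 j) →
      (∀ i (j : κ i), B (i + 1) (Sum.inl j) = D i (ct i j)) →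
      (∀ i (j : κ (i + 1)), B (i + 1) (Sum.inr j) = ct (i + 1) j) →
      (∀ j : κ' 0, B' 0 (Sum.inr j) = ct' 0 j) →
      (∀ i (j : κ' i), B' (i + 1) (Sum.inl j) = D i (ct' i j)) →
      (∀ i (j : κ' (i + 1)), B' (i + 1) (Sum.inr j) = ct' (i + 1) j) →
      ∏ i ∈ Finset.range (r + 1), absDetChange (B i) (b i) ^ ((-1 : ℤ) ^ i) =
      ∏ i ∈ Finset.range (r + 1), absDetChange (B' i) (b i) ^ ((-1 : ℤ) ^ i)) :=
  comb_is_basis_and_det_well_defined_general r V hVtriv D hDD hexact0 hexact ι b κ κ' ct ct'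
    hc_basis hc'_basis
end

section
/- Let (ρ_n) be a sequence of complex numbers with 0 < Re ρ_n < 1 such that Σ_n |ρ_n|^{-2} < ∞. Then the series Σ_n e^{tρ_n}, with each function t ↦ e^{tρ_n} viewed as a distribution on ℝ, converges in the space of distributions 𝒟'(ℝ): for every test function φ ∈ C_c^∞(ℝ), the series Σ_n ∫_ℝ φ(t) e^{tρ_n} dt converges. -/
open MeasureTheory Filter Topology ContDiff

lemma ibp_step (ρ : ℂ) (hρ : ρ ≠ 0) (φ : ℝ → ℂ) (hφ : ContDiff ℝ ∞ φ)
    (hc : HasCompactSupport φ) :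
    ∫ t : ℝ, φ t * Complex.exp ((t : ℂ) * ρ)
      = -ρ⁻¹ * ∫ t : ℝ, deriv φ t * Complex.exp ((t : ℂ) * ρ) := by
  set v : ℝ → ℂ := fun t => ρ⁻¹ * Complex.exp ((t : ℂ) * ρ) with hv_def
  have hexp : ∀ t : ℝ, HasDerivAt (fun t : ℝ => Complex.exp ((t : ℂ) * ρ))
      (Complex.exp ((t : ℂ) * ρ) * ρ) t := by
    intro t
    have h1 : HasDerivAt (fun t : ℝ => (t : ℂ) * ρ) ρ t := by
      simpa using (Complex.ofRealCLM.hasDerivAt (x := t)).mul_const ρ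
    simpa using h1.cexp
  have hv : ∀ t : ℝ, HasDerivAt v (Complex.exp ((t : ℂ) * ρ)) t := by
    intro t
    have := (hexp t).const_mul ρ⁻¹
    have heq : ρ⁻¹ * (Complex.exp ((t : ℂ) * ρ) * ρ) = Complex.exp ((t : ℂ) * ρ) := by
      field_simp
    simpa [heq] using this
  have hu : ∀ t : ℝ, HasDerivAt φ (deriv φ t) t := fun t =>
    ((hφ.differentiable (by norm_num)) t).hasDerivAt
  obtain ⟨R, hRpos, hR⟩ := hc.isCompact.isBounded.subset_closedBall_lt 0 0
  have hzero : ∀ x : ℝ, R < |x| → φ x = 0 := by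
    intro x hx
    by_contra h
    have : x ∈ tsupport φ := subset_tsupport φ h
    have := hR this
    simp [Real.dist_eq] at this
    linarith
  have hbot : Tendsto (φ * v) atBot (𝓝 0) := by
    apply Tendsto.congr' _ tendsto_const_nhds
    filter_upwards [eventually_le_atBot (-(R+1))] with x hx
    have : φ x = 0 := hzero x (by rw [abs_of_nonpos (by linarith)]; linarith)
    simp [this]
  have htop : Tendsto (φ * v) atTop (𝓝 0) := by
    apply Tendsto.congr' _ tendsto_const_nhds
    filter_upwards [eventually_ge_atTop (R+1)] with x hx
    have : φ x = 0 := hzero x (by rw [abs_of_nonneg (by linarith)]; linarith)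
    simp [this]
  have hcont_exp : Continuous (fun t : ℝ => Complex.exp ((t : ℂ) * ρ)) := by
    fun_prop
  have hint1 : Integrable (φ * fun t : ℝ => Complex.exp ((t : ℂ) * ρ)) := by
    exact (hφ.continuous.mul hcont_exp).integrable_of_hasCompactSupport
      (hc.mul_right)
  have hint2 : Integrable (deriv φ * v) := by
    exact ((hφ.continuous_deriv (by norm_num)).mul (by fun_prop)).integrable_of_hasCompactSupport
      (hc.deriv.mul_right)
  have key := integral_mul_deriv_eq_deriv_mul (fun t _ => hu t) (fun t _ => hv t) hint1 hint2 hbot htop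
  have hsplit : ∫ x : ℝ, deriv φ x * v x
      = ρ⁻¹ * ∫ t : ℝ, deriv φ t * Complex.exp ((t : ℂ) * ρ) := by
    rw [← integral_const_mul]
    congr 1; ext t; simp only [hv_def]; ring
  rw [key, hsplit]
  ring

set_option maxHeartbeats 1000000 in
theorem exp_series_converges_as_distribution
    (ρ : ℕ → ℂ) (hρ : ∀ n, 0 < (ρ n).re ∧ (ρ n).re < 1)
    (hsum : Summable (fun n => ‖ρ n‖⁻¹ ^ 2)) :
    ∀ φ : ℝ → ℂ, ContDiff ℝ (⊤ : ℕ∞) φ → HasCompactSupport φ →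
      Summable (fun n => ∫ t : ℝ, φ t * Complex.exp ((t : ℂ) * ρ n)) := by
  intro φ hφ hc
  have hne : ∀ n, ρ n ≠ 0 := by
    intro n h
    have := (hρ n).1
    rw [h] at this; simp at this
  have hφi : ContDiff ℝ ∞ φ := hφ.of_le (by simp)
  have hφ' : ContDiff ℝ ∞ (deriv φ) := (contDiff_infty_iff_deriv.mp hφi).2
  have hφ'' : ContDiff ℝ ∞ (deriv (deriv φ)) := (contDiff_infty_iff_deriv.mp hφ').2
  -- rewrite using double integration by parts
  have key : ∀ n, ∫ t : ℝ, φ t * Complex.exp ((t : ℂ) * ρ n)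
      = (ρ n)⁻¹ ^ 2 * ∫ t : ℝ, deriv (deriv φ) t * Complex.exp ((t : ℂ) * ρ n) := by
    intro n
    rw [ibp_step (ρ n) (hne n) φ hφi hc, ibp_step (ρ n) (hne n) (deriv φ) hφ' hc.deriv]
    ring
  -- uniform bound on the second integral
  set C : ℝ := ∫ t : ℝ, ‖deriv (deriv φ) t‖ * Real.exp |t| with hC
  have hbound : ∀ n, ‖∫ t : ℝ, deriv (deriv φ) t * Complex.exp ((t : ℂ) * ρ n)‖ ≤ C := by
    intro n
    calc ‖∫ t : ℝ, deriv (deriv φ) t * Complex.exp ((t : ℂ) * ρ n)‖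
        ≤ ∫ t : ℝ, ‖deriv (deriv φ) t * Complex.exp ((t : ℂ) * ρ n)‖ :=
          norm_integral_le_integral_norm _
      _ ≤ C := by
          apply integral_mono_of_nonneg
          · filter_upwards with t; positivity
          · exact ((hφ''.continuous.norm).mul (Real.continuous_exp.comp
              continuous_abs)).integrable_of_hasCompactSupport
              (((hc.deriv).deriv.norm).mul_right)
          · filter_upwards with t
            rw [norm_mul]
            apply mul_le_mul_of_nonneg_left _ (norm_nonneg _)
            rw [Complex.norm_exp]
            simp only [Complex.mul_re, Complex.ofReal_re, Complex.ofReal_im, zero_mul, sub_zero]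
            apply Real.exp_le_exp.mpr
            have h1 := (hρ n).1
            have h2 := (hρ n).2
            rcases le_or_gt 0 t with ht | ht
            · calc t * (ρ n).re ≤ t * 1 := by nlinarith
                _ ≤ |t| := by rw [mul_one]; exact le_abs_self t
            · calc t * (ρ n).re ≤ 0 := by nlinarith
                _ ≤ |t| := abs_nonneg t
  apply Summable.of_norm
  refine Summable.of_nonneg_of_le (fun n => norm_nonneg _) ?_ (hsum.mul_left C)
  intro n
  rw [key n, norm_mul]
  have : ‖(ρ n)⁻¹ ^ 2‖ = ‖ρ n‖⁻¹ ^ 2 := by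
    simp [map_pow, map_inv₀]
  rw [this, mul_comm]
  exact mul_le_mul_of_nonneg_right (hbound n) (by positivity)
end
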